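/- arXiv:1501.04013 — 4 statements merged into one kernel-verified Lean document; each statement's English description precedes it below -/
import Mathlib

section
/- Let ρ be a positive random variable with 𝔼[(log ρ)²] < ∞, 𝔼[ρ²] < ∞, ℙ[ρ = 1] < 1, 𝔼[log ρ] < 0 and 𝔼[ρ] ≥ 1. Then there exists a unique β with 𝔼[ρ^β log ρ] = 0 (among t ∈ [0,2] where the moment generating function g(t) = 𝔼[ρ^t] is finite); moreover 0 < β < 1 and γ := 𝔼[ρ^β] < 1. -/
/-!
Write `φ t = 𝔼[ρ^t log ρ]`. Since `t ↦ x^t log x` is increasing, strictly when `x ≠ 1`, and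
`ρ ≠ 1` with positive probability, `φ` is strictly increasing: this gives uniqueness. The
tangent-line inequality `y - 1 ≤ y log y`, strict for `y ≠ 1`, taken at `y = ρ^s` reads
`𝔼[ρ^s] - 1 < s * φ s`. At `s = 1` it gives `φ 1 > 𝔼[ρ] - 1 ≥ 0`; since `φ 0 = 𝔼[log ρ] < 0`
and `φ` is continuous on `[0, 1]` by dominated convergence (`ρ^t log ρ` lies between `log ρ`
and `ρ log ρ`), a zero `β ∈ (0, 1)` exists, and at `s = β` the inequality gives `γ < 1`.
-/

open MeasureTheory Filter Real Set

namespace Real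

lemma rpow_mul_log_lt_rpow_mul_log {x s t : ℝ} (hx : 0 < x) (hx1 : x ≠ 1) (hst : s < t) :
    x ^ s * log x < x ^ t * log x := by
  rcases hx1.lt_or_gt with hlt | hgt
  · exact mul_lt_mul_of_neg_right (rpow_lt_rpow_of_exponent_gt hx hlt hst) (log_neg hx hlt)
  · exact mul_lt_mul_of_pos_right (rpow_lt_rpow_of_exponent_lt hgt hst) (log_pos hgt)

lemma rpow_mul_log_le_rpow_mul_log {x s t : ℝ} (hx : 0 < x) (hst : s ≤ t) :
    x ^ s * log x ≤ x ^ t * log x := by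
  rcases eq_or_ne x 1 with rfl | hx1
  · simp
  rcases hst.eq_or_lt with rfl | hlt
  · rfl
  · exact (rpow_mul_log_lt_rpow_mul_log hx hx1 hlt).le

lemma rpow_sub_one_le_mul_rpow_mul_log {x : ℝ} (hx : 0 < x) (s : ℝ) :
    x ^ s - 1 ≤ s * (x ^ s * log x) := by
  have h := self_sub_one_le_mul_log (rpow_nonneg hx.le s)
  rwa [log_rpow hx, mul_left_comm] at h

lemma rpow_sub_one_lt_mul_rpow_mul_log {x s : ℝ} (hx : 0 < x) (hx1 : x ≠ 1) (hs : s ≠ 0) :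
    x ^ s - 1 < s * (x ^ s * log x) := by
  have hxs : x ^ s ≠ 1 := fun h => by
    have := congrArg log h
    rw [log_rpow hx, log_one] at this
    exact mul_ne_zero hs (log_ne_zero_of_pos_of_ne_one hx hx1) this
  have h := self_sub_one_lt_mul_log (rpow_nonneg hx.le s) hxs
  rwa [log_rpow hx, mul_left_comm] at h

end Real

lemma integral_pos_of_nonneg_of_pos_on {Ω : Type*} [MeasurableSpace Ω] {μ : Measure Ω}
    {f : Ω → ℝ} {s : Set Ω} (hf : Integrable f μ) (hf0 : 0 ≤ f) (hfs : ∀ ω ∈ s, 0 < f ω)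
    (hs : μ s ≠ 0) : 0 < ∫ ω, f ω ∂μ := by
  rw [integral_pos_iff_support_of_nonneg hf0 hf]
  exact (pos_iff_ne_zero.mpr hs).trans_le (measure_mono fun ω hω => (hfs ω hω).ne')

section Moments

variable {Ω : Type*} [MeasurableSpace Ω] {μ : Measure Ω} {ρ : Ω → ℝ}

lemma integral_rpow_mul_log_lt (hρ : ∀ ω, 0 < ρ ω) (hne : μ {ω | ρ ω ≠ 1} ≠ 0) {s t : ℝ}
    (hst : s < t) (hs : Integrable (fun ω => ρ ω ^ s * log (ρ ω)) μ)
    (ht : Integrable (fun ω => ρ ω ^ t * log (ρ ω)) μ) :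
    ∫ ω, ρ ω ^ s * log (ρ ω) ∂μ < ∫ ω, ρ ω ^ t * log (ρ ω) ∂μ := by
  have h := integral_pos_of_nonneg_of_pos_on
    (f := fun ω => ρ ω ^ t * log (ρ ω) - ρ ω ^ s * log (ρ ω)) (ht.sub hs)
    (fun ω => sub_nonneg.mpr (rpow_mul_log_le_rpow_mul_log (hρ ω) hst.le))
    (fun ω hω => sub_pos.mpr (rpow_mul_log_lt_rpow_mul_log (hρ ω) hω hst)) hne
  rw [integral_sub ht hs] at h
  linarith

lemma integral_rpow_sub_one_lt [IsProbabilityMeasure μ] (hρ : ∀ ω, 0 < ρ ω)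
    (hne : μ {ω | ρ ω ≠ 1} ≠ 0) {s : ℝ} (hs : s ≠ 0) (hint : Integrable (fun ω => ρ ω ^ s) μ)
    (hint_log : Integrable (fun ω => ρ ω ^ s * log (ρ ω)) μ) :
    ∫ ω, ρ ω ^ s ∂μ - 1 < s * ∫ ω, ρ ω ^ s * log (ρ ω) ∂μ := by
  have hsub : Integrable (fun ω => ρ ω ^ s - 1) μ := hint.sub (integrable_const 1)
  have h := integral_pos_of_nonneg_of_pos_on
    (f := fun ω => s * (ρ ω ^ s * log (ρ ω)) - (ρ ω ^ s - 1)) ((hint_log.const_mul s).sub hsub)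
    (fun ω => sub_nonneg.mpr (rpow_sub_one_le_mul_rpow_mul_log (hρ ω) s))
    (fun ω hω => sub_pos.mpr (rpow_sub_one_lt_mul_rpow_mul_log (hρ ω) hω hs)) hne
  rw [integral_sub (hint_log.const_mul s) hsub, integral_sub hint (integrable_const 1),
    integral_const_mul] at h
  simp only [integral_const, probReal_univ, smul_eq_mul, one_mul] at h
  linarith

lemma integrable_mul_log_self [IsFiniteMeasure μ] (hρm : Measurable ρ) (hρ : ∀ ω, 0 < ρ ω)
    (h1 : Integrable ρ μ) (h2 : Integrable (fun ω => ρ ω ^ 2) μ) :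
    Integrable (fun ω => ρ ω * log (ρ ω)) μ := by
  refine integrable_of_le_of_le (g₁ := fun ω => ρ ω - 1) (g₂ := fun ω => ρ ω ^ 2 - ρ ω)
    (by fun_prop) (Eventually.of_forall fun ω => self_sub_one_le_mul_log (hρ ω).le)
    (Eventually.of_forall fun ω => ?_) (h1.sub (integrable_const 1)) (h2.sub h1)
  have := mul_le_mul_of_nonneg_left (log_le_sub_one_of_pos (hρ ω)) (hρ ω).le
  dsimp only
  nlinarith

lemma integrable_rpow_of_mem_Icc [IsFiniteMeasure μ] (hρm : Measurable ρ) (hρ : ∀ ω, 0 < ρ ω)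
    (h1 : Integrable ρ μ) {t : ℝ}
    (ht : t ∈ Icc (0 : ℝ) 1) : Integrable (fun ω => ρ ω ^ t) μ := by
  refine ((integrable_const 1).add h1).mono' (hρm.pow_const t).aestronglyMeasurable
    (Eventually.of_forall fun ω => ?_)
  rw [norm_of_nonneg (rpow_nonneg (hρ ω).le t), Pi.add_apply]
  rcases le_total (ρ ω) 1 with hle | hge
  · linarith [rpow_le_one (hρ ω).le hle ht.1, hρ ω]
  · linarith [rpow_le_self_of_one_le hge ht.2]

lemma integrable_rpow_mul_log_of_mem_Icc (hρm : Measurable ρ) (hρ : ∀ ω, 0 < ρ ω)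
    (h0 : Integrable (fun ω => log (ρ ω)) μ)
    (h1 : Integrable (fun ω => ρ ω * log (ρ ω)) μ) {t : ℝ} (ht : t ∈ Icc (0 : ℝ) 1) :
    Integrable (fun ω => ρ ω ^ t * log (ρ ω)) μ := by
  refine integrable_of_le_of_le (by fun_prop)
    (Eventually.of_forall fun ω => ?_) (Eventually.of_forall fun ω => ?_) h0 h1
  · simpa using rpow_mul_log_le_rpow_mul_log (hρ ω) ht.1
  · simpa using rpow_mul_log_le_rpow_mul_log (hρ ω) ht.2

lemma continuousOn_integral_rpow_mul_log (hρm : Measurable ρ) (hρ : ∀ ω, 0 < ρ ω)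
    (h0 : Integrable (fun ω => log (ρ ω)) μ)
    (h1 : Integrable (fun ω => ρ ω * log (ρ ω)) μ) :
    ContinuousOn (fun t : ℝ => ∫ ω, ρ ω ^ t * log (ρ ω) ∂μ) (Icc 0 1) := by
  refine continuousOn_of_dominated (bound := fun ω => |log (ρ ω)| + |ρ ω * log (ρ ω)|)
    (fun t _ => by fun_prop) (fun t ht => Eventually.of_forall fun ω => ?_) (h0.abs.add h1.abs)
    (Eventually.of_forall fun ω => ?_)
  · have lower := rpow_mul_log_le_rpow_mul_log (hρ ω) ht.1
    have upper := rpow_mul_log_le_rpow_mul_log (hρ ω) ht.2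
    rw [rpow_zero, one_mul] at lower
    rw [rpow_one] at upper
    exact (abs_le_max_abs_abs lower upper).trans
      (max_le_add_of_nonneg (abs_nonneg _) (abs_nonneg _))
  · exact ((continuous_const.rpow continuous_id fun _ => Or.inl (hρ ω).ne').mul
      continuous_const).continuousOn

end Moments

/-- **Existence and uniqueness of `β`**: if `ρ > 0` with `𝔼[(log ρ)²] < ∞`, `𝔼[ρ²] < ∞`,
`ℙ[ρ = 1] < 1`, `𝔼[log ρ] < 0` and `𝔼[ρ] ≥ 1`, then there is a unique `β` with
`𝔼[ρ^β log ρ] = 0` (among the `t ∈ [0,2]` where the moment generating function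
`g(t) = 𝔼[ρ^t]` is finite); moreover `0 < β < 1` and `γ := 𝔼[ρ^β] < 1`. -/
theorem stmt9
    {Ω : Type*} [MeasurableSpace Ω]
    (μ : Measure Ω) [IsProbabilityMeasure μ]
    (ρ : Ω → ℝ) (hρmeas : Measurable ρ) (hρpos : ∀ ω, 0 < ρ ω)
    (h1 : Integrable (fun ω => (Real.log (ρ ω)) ^ 2) μ)
    (h2 : Integrable (fun ω => (ρ ω) ^ 2) μ)
    (h3 : μ {ω | ρ ω = 1} < 1)
    (h4 : ∫ ω, Real.log (ρ ω) ∂μ < 0)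
    (h5 : 1 ≤ ∫ ω, ρ ω ∂μ) :
    ∃ β : ℝ, β ∈ Set.Ioo (0 : ℝ) 1 ∧
      Integrable (fun ω => (ρ ω) ^ β * Real.log (ρ ω)) μ ∧
      ∫ ω, (ρ ω) ^ β * Real.log (ρ ω) ∂μ = 0 ∧
      ∫ ω, (ρ ω) ^ β ∂μ < 1 ∧
      ∀ t ∈ Set.Icc (0 : ℝ) 2,
        Integrable (fun ω => (ρ ω) ^ t * Real.log (ρ ω)) μ →
        ∫ ω, (ρ ω) ^ t * Real.log (ρ ω) ∂μ = 0 → t = β := by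
  have hne : μ {ω | ρ ω ≠ 1} ≠ 0 := by
    change μ (ρ ⁻¹' {1})ᶜ ≠ 0
    rw [Ne, prob_compl_eq_zero_iff (hρmeas (measurableSet_singleton 1))]
    exact h3.ne
  have hlog : Integrable (fun ω => log (ρ ω)) μ :=
    ((memLp_two_iff_integrable_sq hρmeas.log.aestronglyMeasurable).mpr h1).integrable one_le_two
  have hρint : Integrable ρ μ :=
    ((memLp_two_iff_integrable_sq hρmeas.aestronglyMeasurable).mpr h2).integrable one_le_two
  have hρlog := integrable_mul_log_self hρmeas hρpos hρint h2
  have hint_log : ∀ t ∈ Icc (0 : ℝ) 1, Integrable (fun ω => ρ ω ^ t * log (ρ ω)) μ :=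
    fun _ => integrable_rpow_mul_log_of_mem_Icc hρmeas hρpos hlog hρlog
  have hφ0 : ∫ ω, ρ ω ^ (0 : ℝ) * log (ρ ω) ∂μ < 0 := by simpa using h4
  have hφ1 : 0 < ∫ ω, ρ ω ^ (1 : ℝ) * log (ρ ω) ∂μ := by
    have := integral_rpow_sub_one_lt hρpos hne one_ne_zero (by simpa using hρint)
      (hint_log 1 ⟨zero_le_one, le_rfl⟩)
    simp only [rpow_one, one_mul] at this ⊢
    linarith
  obtain ⟨β, hβ, hφβ⟩ := intermediate_value_Ioo zero_le_one
    (continuousOn_integral_rpow_mul_log hρmeas hρpos hlog hρlog) ⟨hφ0, hφ1⟩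
  have hβint := hint_log β (Ioo_subset_Icc_self hβ)
  refine ⟨β, hβ, hβint, hφβ, ?_, fun t _ ht hφt => ?_⟩
  · have := integral_rpow_sub_one_lt hρpos hne hβ.1.ne'
      (integrable_rpow_of_mem_Icc hρmeas hρpos hρint (Ioo_subset_Icc_self hβ)) hβint
    simp only [hφβ, mul_zero] at this
    linarith
  · by_contra htβ
    rcases lt_or_gt_of_ne htβ with hlt | hgt
    · exact (integral_rpow_mul_log_lt hρpos hne hlt ht hβint).ne (hφt.trans hφβ.symm)
    · exact (integral_rpow_mul_log_lt hρpos hne hgt hβint ht).ne' (hφt.trans hφβ.symm)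
end

section
/- Let ε > 0, let k ≤ m be positive integers, let ρ₁,…,ρ_m be positive reals with partial sums Y_j = log ρ₁ + … + log ρ_j satisfying Y_j ≥ ε·j for all 1 ≤ j ≤ m, and let M₁,…,M_m be nonnegative integers with M₁ = … = M_k = 0 and M_n < n for k < n ≤ m. Define X₀ = 1 and X_n = max(ρ_n·X_{n−1} − M_n, 0). Then X_j = exp(Y_j) for 1 ≤ j ≤ k and X_j ≥ exp(Y_j)·(1 − Σ_{n=k+1}^{j} n·exp(−Y_n)) for k < j ≤ m; in particular, if c := 1 − Σ_{n=k+1}^{∞} n·e^{−εn} > 0, then X_j ≥ c·exp(Y_j) ≥ c·e^{εj} > 0 for all 1 ≤ j ≤ m. -/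
open Finset

noncomputable section

/-!
Let `G` be the unperturbed solution, `G (n + 1) = ρ (n + 1) * G n`; here `G = exp ∘ Y`.
As long as `M` vanishes, `X` coincides with `G`. Afterwards, comparing `X` with `G` and
dividing by `G`, each subtraction of `M n ≤ n` costs at most `n / G n` of the ratio
`X / G`, while the truncation at `0` only helps. Since `G n ≥ exp (ε n)`, the accumulated
losses are bounded by the tail `∑_{n > k} n e^{-ε n}`.
-/

section Recursion

variable {ρ M X G : ℕ → ℝ}

theorem recursion_eq_of_forall_eq_zero
    (hXrec : ∀ n, X (n + 1) = max (ρ (n + 1) * X n - M (n + 1)) 0)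
    (hG : ∀ n, G (n + 1) = ρ (n + 1) * G n) (hG_nonneg : ∀ n, 0 ≤ G n) (hG0 : G 0 = X 0)
    {k : ℕ} (hM : ∀ n, 1 ≤ n → n ≤ k → M n = 0) :
    ∀ j, j ≤ k → X j = G j := by
  intro j
  induction j with
  | zero => exact fun _ => hG0.symm
  | succ n ih =>
    intro hnk
    rw [hXrec, hM (n + 1) (by omega) hnk, ih (by omega), sub_zero, ← hG,
      max_eq_left (hG_nonneg _)]

theorem mul_one_sub_sum_div_le_recursion
    (hXrec : ∀ n, X (n + 1) = max (ρ (n + 1) * X n - M (n + 1)) 0)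
    (hG : ∀ n, G (n + 1) = ρ (n + 1) * G n) (hG_ne : ∀ n, G n ≠ 0) (hρ : ∀ n, 0 ≤ ρ n)
    {k m : ℕ} {b : ℕ → ℝ} (hM : ∀ n, k < n → n ≤ m → M n ≤ b n) (hXk : G k ≤ X k) :
    ∀ j, k ≤ j → j ≤ m → G j * (1 - ∑ n ∈ Icc (k + 1) j, b n / G n) ≤ X j := by
  intro j hkj
  induction j, hkj using Nat.le_induction with
  | base => simpa using fun _ => hXk
  | succ j hkj ih =>
    intro hjm
    set S := ∑ n ∈ Icc (k + 1) j, b n / G n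
    have hsplit : G (j + 1) * (1 - ∑ n ∈ Icc (k + 1) (j + 1), b n / G n)
        = ρ (j + 1) * (G j * (1 - S)) - b (j + 1) := by
      have hlast : G (j + 1) * (b (j + 1) / G (j + 1)) = b (j + 1) :=
        mul_div_cancel₀ _ (hG_ne _)
      rw [sum_Icc_succ_top (by omega), mul_sub, mul_add, hlast, hG]
      ring
    calc G (j + 1) * (1 - ∑ n ∈ Icc (k + 1) (j + 1), b n / G n)
        = ρ (j + 1) * (G j * (1 - S)) - b (j + 1) := hsplit
      _ ≤ ρ (j + 1) * X j - M (j + 1) := by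
          gcongr
          · exact hρ _
          · exact ih (by omega)
          · exact hM (j + 1) (by omega) hjm
      _ ≤ X (j + 1) := hXrec j ▸ le_max_left _ _

end Recursion

theorem sum_Icc_mul_exp_neg_le_tsum {ε : ℝ} (hε : 0 < ε) {Y : ℕ → ℝ} {k j : ℕ}
    (hY : ∀ n ∈ Icc (k + 1) j, ε * n ≤ Y n) :
    ∑ n ∈ Icc (k + 1) j, (n : ℝ) * Real.exp (-Y n)
      ≤ ∑' n : ℕ, (if k + 1 ≤ n then (n : ℝ) * Real.exp (-(ε * n)) else 0) := by
  set f : ℕ → ℝ := fun n => if k + 1 ≤ n then (n : ℝ) * Real.exp (-(ε * n)) else 0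
  have hf_nonneg : ∀ n, 0 ≤ f n := fun n => by dsimp only [f]; split <;> positivity
  have hf : Summable f := by
    refine (Real.summable_pow_mul_exp_neg_nat_mul 1 hε).of_nonneg_of_le hf_nonneg fun n => ?_
    dsimp only [f]
    split
    · simp [neg_mul]
    · positivity
  calc ∑ n ∈ Icc (k + 1) j, (n : ℝ) * Real.exp (-Y n)
      ≤ ∑ n ∈ Icc (k + 1) j, f n := by
        refine sum_le_sum fun n hn => ?_
        simp only [f, if_pos (mem_Icc.1 hn).1]
        gcongr
        exact hY n hn
    _ ≤ ∑' n, f n := hf.sum_le_tsum _ fun n _ => hf_nonneg n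

theorem stmt11_general
    (ε : ℝ) (hε : 0 < ε)
    (k m : ℕ)
    (ρ : ℕ → ℝ) (hρ : ∀ n, 0 < ρ n)
    (M : ℕ → ℕ)
    (Y : ℕ → ℝ) (hY : ∀ j, Y j = ∑ i ∈ Finset.Icc 1 j, Real.log (ρ i))
    (hYε : ∀ j, 1 ≤ j → j ≤ m → ε * j ≤ Y j)
    (hM0 : ∀ n, 1 ≤ n → n ≤ k → M n = 0)
    (hMlt : ∀ n, k < n → n ≤ m → (M n : ℝ) < n)
    (X : ℕ → ℝ) (hX0 : X 0 = 1)
    (hXrec : ∀ n, X (n + 1) = max (ρ (n + 1) * X n - M (n + 1)) 0) :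
    (∀ j, 1 ≤ j → j ≤ k → X j = Real.exp (Y j)) ∧
    (∀ j, k < j → j ≤ m →
      Real.exp (Y j) * (1 - ∑ n ∈ Finset.Icc (k + 1) j, (n : ℝ) * Real.exp (-Y n))
        ≤ X j) ∧
    (∀ c : ℝ,
      c = 1 - ∑' n : ℕ, (if k + 1 ≤ n then (n : ℝ) * Real.exp (-(ε * n)) else 0) →
      0 < c →
      ∀ j, 1 ≤ j → j ≤ m →
        0 < c * Real.exp (ε * j) ∧
        c * Real.exp (ε * j) ≤ c * Real.exp (Y j) ∧
        c * Real.exp (Y j) ≤ X j) := by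
  have hG : ∀ n, Real.exp (Y (n + 1)) = ρ (n + 1) * Real.exp (Y n) := fun n => by
    rw [hY, hY, sum_Icc_succ_top (by omega), Real.exp_add, Real.exp_log (hρ _), mul_comm]
  have hG0 : Real.exp (Y 0) = X 0 := by simp [hY, hX0]
  have hinit := recursion_eq_of_forall_eq_zero (M := fun n => (M n : ℝ)) hXrec hG
    (fun n => (Real.exp_pos _).le) hG0 (by exact_mod_cast hM0)
  have hlower : ∀ j, j ≤ m →
      Real.exp (Y j) * (1 - ∑ n ∈ Icc (k + 1) j, (n : ℝ) * Real.exp (-Y n)) ≤ X j := by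
    intro j hjm
    rcases le_or_gt j k with hjk | hkj
    · simp [Icc_eq_empty_of_lt (Nat.lt_succ_of_le hjk), hinit j hjk]
    · simpa only [Real.exp_neg, div_eq_mul_inv] using
        mul_one_sub_sum_div_le_recursion (M := fun n => (M n : ℝ)) hXrec hG
          (fun n => (Real.exp_pos _).ne') (fun n => (hρ n).le) (b := fun n => (n : ℝ))
          (fun n hkn hnm => (hMlt n hkn hnm).le) (hinit k le_rfl).ge j hkj.le hjm
  refine ⟨fun j _ hjk => hinit j hjk, fun j _ hjm => hlower j hjm, ?_⟩
  intro c hc hc_pos j hj hjm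
  have htail := sum_Icc_mul_exp_neg_le_tsum hε (Y := Y) (k := k) (j := j)
    fun n hn => hYε n (by linarith [(mem_Icc.1 hn).1]) (by linarith [(mem_Icc.1 hn).2])
  refine ⟨by positivity, by gcongr; exact hYε j hj hjm, ?_⟩
  calc c * Real.exp (Y j)
      ≤ (1 - ∑ n ∈ Icc (k + 1) j, (n : ℝ) * Real.exp (-Y n)) * Real.exp (Y j) := by
        gcongr; linarith
    _ ≤ X j := by rw [mul_comm]; exact hlower j hjm

/-- **Deterministic lower bound for the random-difference-equation recursion**
(step in the proof of Proposition 2.1): let `ε > 0`, `1 ≤ k ≤ m`, let `ρ_n > 0` with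
`Y_j = log ρ₁ + … + log ρ_j ≥ ε·j` for `1 ≤ j ≤ m`, and let `M_n ∈ ℕ₀` with
`M₁ = … = M_k = 0` and `M_n < n` for `k < n ≤ m`. Define `X₀ = 1`,
`X_n = (ρ_n X_{n-1} − M_n)₊`. Then `X_j = exp(Y_j)` for `1 ≤ j ≤ k`,
`X_j ≥ exp(Y_j)(1 − ∑_{n=k+1}^j n·exp(−Y_n))` for `k < j ≤ m`, and if
`c := 1 − ∑_{n=k+1}^∞ n·e^{−εn} > 0`, then `X_j ≥ c·exp(Y_j) ≥ c·e^{εj} > 0`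
for all `1 ≤ j ≤ m`. -/
theorem stmt11
    (ε : ℝ) (hε : 0 < ε)
    (k m : ℕ) (hk : 1 ≤ k) (hkm : k ≤ m)
    (ρ : ℕ → ℝ) (hρ : ∀ n, 0 < ρ n)
    (M : ℕ → ℕ)
    (Y : ℕ → ℝ) (hY : ∀ j, Y j = ∑ i ∈ Finset.Icc 1 j, Real.log (ρ i))
    (hYε : ∀ j, 1 ≤ j → j ≤ m → ε * j ≤ Y j)
    (hM0 : ∀ n, 1 ≤ n → n ≤ k → M n = 0)
    (hMlt : ∀ n, k < n → n ≤ m → (M n : ℝ) < n)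
    (X : ℕ → ℝ) (hX0 : X 0 = 1)
    (hXrec : ∀ n, X (n + 1) = max (ρ (n + 1) * X n - M (n + 1)) 0) :
    (∀ j, 1 ≤ j → j ≤ k → X j = Real.exp (Y j)) ∧
    (∀ j, k < j → j ≤ m →
      Real.exp (Y j) * (1 - ∑ n ∈ Finset.Icc (k + 1) j, (n : ℝ) * Real.exp (-Y n))
        ≤ X j) ∧
    (∀ c : ℝ,
      c = 1 - ∑' n : ℕ, (if k + 1 ≤ n then (n : ℝ) * Real.exp (-(ε * n)) else 0) →
      0 < c →
      ∀ j, 1 ≤ j → j ≤ m →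
        0 < c * Real.exp (ε * j) ∧
        c * Real.exp (ε * j) ≤ c * Real.exp (Y j) ∧
        c * Real.exp (Y j) ≤ X j) :=
  stmt11_general ε hε k m ρ hρ M Y hY hYε hM0 hMlt X hX0 hXrec
end
end

section
/- Let (U_i)_{i≥1} be i.i.d. real random variables with partial sums Y_j = U₁ + … + U_j, let κ > 0 and κ̃ ∈ (0,1], and set ε = κ·κ̃. Then for every m ∈ ℕ: ℙ[Y_j ≥ ε·j for all 1 ≤ j ≤ m] ≥ ℙ[U₁ > κ]^{κ̃m+1} · ℙ[Y_j ≥ 0 for all 1 ≤ j ≤ m]. -/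
/-!
Let `k = ⌈κ̃ m⌉`. On the event that the first `k` steps all exceed `κ` and that the walk
restarted after step `k` stays nonnegative for `m` steps, the walk satisfies `Y_j ≥ κ j ≥ ε j`
for `j ≤ k` and `Y_j ≥ κ k ≥ κ κ̃ m ≥ ε j` for `k < j ≤ m`. The two events depend on disjoint
blocks of increments, so they are independent; the first has probability
`ℙ[U₁ > κ]^k ≥ ℙ[U₁ > κ]^{κ̃ m + 1}`, and the second has the same probability as
`ℙ[Y_j ≥ 0, 1 ≤ j ≤ m]` because the shifted sequence of increments has the same law.
-/

open MeasureTheory ProbabilityTheory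

open Finset in
lemma mul_le_sum_range_of_head_tail {x : ℕ → ℝ} {κ κ' : ℝ} {k m : ℕ} (hκ : 0 ≤ κ)
    (hκ'0 : 0 ≤ κ') (hκ'1 : κ' ≤ 1) (hk : κ' * m ≤ k) (hhead : ∀ i < k, κ ≤ x i)
    (htail : ∀ l, 1 ≤ l → l ≤ m → 0 ≤ ∑ i ∈ range l, x (k + i)) {j : ℕ} (hj : j ≤ m) :
    κ * κ' * j ≤ ∑ i ∈ range j, x i := by
  have hhead_sum : ∀ n ≤ k, n * κ ≤ ∑ i ∈ range n, x i := fun n hn ↦ by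
    simpa using card_nsmul_le_sum (range n) x κ fun i hi ↦ hhead i (by simp at hi; omega)
  rcases le_or_gt j k with hjk | hkj
  · calc κ * κ' * j ≤ κ * 1 * j := by gcongr
      _ = j * κ := by ring
      _ ≤ _ := hhead_sum j hjk
  · obtain ⟨l, rfl⟩ := Nat.exists_eq_add_of_le hkj.le
    rw [sum_range_add]
    calc κ * κ' * ↑(k + l) ≤ κ * (κ' * m) := by rw [mul_assoc]; gcongr
      _ ≤ k * κ := by nlinarith
      _ ≤ _ := le_add_of_le_of_nonneg (hhead_sum k le_rfl) (htail l (by omega) (by omega))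

lemma measurableSet_forall_sum_range_nonneg (m : ℕ) :
    MeasurableSet {x : ℕ → ℝ | ∀ l, 1 ≤ l → l ≤ m → 0 ≤ ∑ i ∈ Finset.range l, x i} := by
  simp only [Set.ofPred_forall]
  exact .iInter fun _ ↦ .iInter fun _ ↦ .iInter fun _ ↦
    measurableSet_le measurable_const (by fun_prop)

namespace ProbabilityTheory

variable {Ω β : Type*} [MeasurableSpace Ω] [mβ : MeasurableSpace β] {μ : Measure Ω}
  {X : ℕ → Ω → β}

lemma iIndepFun.indepFun_head_shift (hmeas : ∀ i, Measurable (X i)) (hindep : iIndepFun X μ)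
    (k : ℕ) : IndepFun (fun ω (i : Fin k) ↦ X i ω) (fun ω i ↦ X (k + i) ω) μ := by
  have h := indep_iSup_of_disjoint (fun i ↦ (hmeas i).comap_le)
    ((iIndepFun_iff_iIndep _ _ _).1 hindep)
    (Set.disjoint_left.2 fun i (hi : i < k) (hi' : k ≤ i) ↦ hi.not_ge hi')
  rw [IndepFun_iff_Indep]
  refine indep_of_indep_of_le_right (indep_of_indep_of_le_left h ?_) ?_
  -- `measurable_pi_iff` is applied with the block σ-algebras on `Ω`, not the instance
  · refine Measurable.comap_le ((@measurable_pi_iff _ _ _ (_) _ _).2 fun i ↦ .of_comap_le ?_)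
    exact le_iSup₂ (f := fun j (_ : j ∈ Set.Iio k) ↦ mβ.comap (X j)) (i : ℕ) i.2
  · refine Measurable.comap_le ((@measurable_pi_iff _ _ _ (_) _ _).2 fun i ↦ .of_comap_le ?_)
    exact le_iSup₂ (f := fun j (_ : j ∈ Set.Ici k) ↦ mβ.comap (X j)) (k + i) (Nat.le_add_right k i)

lemma iIndepFun.identDistrib_shift (hmeas : ∀ i, Measurable (X i)) (hindep : iIndepFun X μ)
    (hident : ∀ i, IdentDistrib (X i) (X 0) μ μ) (k : ℕ) :
    IdentDistrib (fun ω i ↦ X (k + i) ω) (fun ω i ↦ X i ω) μ μ where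
  aemeasurable_fst := (measurable_pi_iff.2 fun _ ↦ hmeas _).aemeasurable
  aemeasurable_snd := (measurable_pi_iff.2 hmeas).aemeasurable
  map_eq := by
    rw [(hindep.precomp (add_right_injective k)).map_fun_eq_infinitePi_map fun _ ↦ hmeas _,
      hindep.map_fun_eq_infinitePi_map hmeas]
    congr with i : 1
    rw [(hident _).map_eq, (hident i).map_eq]

lemma iIndepFun.measure_head_preimage_pi (hindep : iIndepFun X μ)
    (hident : ∀ i, IdentDistrib (X i) (X 0) μ μ) (k : ℕ) {s : Set β} (hs : MeasurableSet s) :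
    μ ((fun ω (i : Fin k) ↦ X i ω) ⁻¹' Set.univ.pi fun _ ↦ s) = μ (X 0 ⁻¹' s) ^ k := by
  have : (fun ω (i : Fin k) ↦ X i ω) ⁻¹' Set.univ.pi (fun _ ↦ s) = ⋂ i : Fin k, X i ⁻¹' s := by
    ext; simp
  rw [this, (hindep.precomp Fin.val_injective).meas_iInter fun i ↦ ⟨s, hs, rfl⟩,
    Finset.prod_congr rfl fun (i : Fin k) _ ↦ (hident i).measure_mem_eq hs, Finset.prod_const,
    Finset.card_univ, Fintype.card_fin]

theorem iIndepFun.measure_linear_growth_ge [IsProbabilityMeasure μ] {X : ℕ → Ω → ℝ}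
    (hmeas : ∀ i, Measurable (X i)) (hindep : iIndepFun X μ)
    (hident : ∀ i, IdentDistrib (X i) (X 0) μ μ) {κ κ' : ℝ} (hκ : 0 ≤ κ) (hκ'0 : 0 ≤ κ')
    (hκ'1 : κ' ≤ 1) (m : ℕ) :
    μ (X 0 ⁻¹' Set.Ioi κ) ^ (κ' * m + 1 : ℝ)
        * μ {ω | ∀ j, 1 ≤ j → j ≤ m → 0 ≤ ∑ i ∈ Finset.range j, X i ω}
      ≤ μ {ω | ∀ j, 1 ≤ j → j ≤ m → κ * κ' * j ≤ ∑ i ∈ Finset.range j, X i ω} := by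
  set k := ⌈κ' * m⌉₊
  set head := (fun ω (i : Fin k) ↦ X i ω) ⁻¹' Set.univ.pi fun _ ↦ Set.Ioi κ
  set tail := (fun ω i ↦ X (k + i) ω) ⁻¹'
    {x : ℕ → ℝ | ∀ l, 1 ≤ l → l ≤ m → 0 ≤ ∑ i ∈ Finset.range l, x i}
  have hpow : μ (X 0 ⁻¹' Set.Ioi κ) ^ (κ' * m + 1 : ℝ) ≤ μ head := by
    rw [hindep.measure_head_preimage_pi hident k measurableSet_Ioi, ← ENNReal.rpow_natCast]
    exact ENNReal.rpow_le_rpow_of_exponent_ge prob_le_one (Nat.ceil_lt_add_one (by positivity)).le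
  have htail : μ tail = μ {ω | ∀ j, 1 ≤ j → j ≤ m → 0 ≤ ∑ i ∈ Finset.range j, X i ω} :=
    (hindep.identDistrib_shift hmeas hident k).measure_mem_eq
      (measurableSet_forall_sum_range_nonneg m)
  calc _ ≤ μ head * μ tail := by rw [htail]; gcongr
    _ = μ (head ∩ tail) :=
      ((hindep.indepFun_head_shift hmeas k).measure_inter_preimage_eq_mul _ _
        (.univ_pi fun _ ↦ measurableSet_Ioi) (measurableSet_forall_sum_range_nonneg m)).symm
    _ ≤ _ := by
      refine measure_mono fun ω ⟨hhead, htail_ω⟩ j _ hj ↦ ?_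
      exact mul_le_sum_range_of_head_tail (x := fun i ↦ X i ω) hκ hκ'0 hκ'1 (Nat.le_ceil _)
          (fun i hi ↦ (hhead ⟨i, hi⟩ trivial).le) htail_ω hj

end ProbabilityTheory

/-- **Lower bound (2.3) for the probability of linear growth of a random walk**: let
`(U_i)_{i≥1}` be i.i.d. real random variables with partial sums `Y_j = U₁ + … + U_j`,
let `κ > 0`, `κ̃ ∈ (0,1]` and `ε = κ·κ̃`. Then for every `m ≥ 1`,
`ℙ[∀ 1 ≤ j ≤ m, Y_j ≥ ε·j] ≥ ℙ[U₁ > κ]^{κ̃ m + 1} · ℙ[∀ 1 ≤ j ≤ m, Y_j ≥ 0]`. -/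
theorem stmt12
    {Ω : Type*} [MeasurableSpace Ω]
    (μ : Measure Ω) [IsProbabilityMeasure μ]
    (U : ℕ → Ω → ℝ) (hUmeas : ∀ i, Measurable (U i))
    (hiid : iIndepFun U μ)
    (hident : ∀ i, IdentDistrib (U i) (U 1) μ μ)
    (κ κ' : ℝ) (hκ : 0 < κ) (hκ' : κ' ∈ Set.Ioc (0 : ℝ) 1)
    (ε : ℝ) (hε : ε = κ * κ')
    (Y : ℕ → Ω → ℝ) (hY : ∀ j ω, Y j ω = ∑ i ∈ Finset.Icc 1 j, U i ω) :
    ∀ m : ℕ, 1 ≤ m →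
      (μ {ω | κ < U 1 ω}) ^ (κ' * m + 1 : ℝ)
          * μ {ω | ∀ j, 1 ≤ j → j ≤ m → 0 ≤ Y j ω}
        ≤ μ {ω | ∀ j, 1 ≤ j → j ≤ m → ε * j ≤ Y j ω} := by
  intro m _
  have hYshift : ∀ j ω, Y j ω = ∑ i ∈ Finset.range j, U (i + 1) ω := fun j ω ↦ by
    rw [hY, Finset.range_eq_Ico, Finset.sum_Ico_add' (U · ω) 0 j 1]; rfl
  simp only [hε, hYshift]
  exact (hiid.precomp (add_left_injective 1)).measure_linear_growth_ge (fun _ ↦ hUmeas _)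
    (fun i ↦ hident (i + 1)) hκ.le hκ'.1.le hκ'.2 m
end

section
/- Let (M_k)_{k≥1} be a sequence in ℕ₀ ∪ {∞} with M₁ = 0 and let {ξ_i^{(k)} : i, k ≥ 1} be nonnegative integers. Define W₀ = 0 and W_k = Σ_{i=1}^{(W_{k−1}+1−M_k)₊} ξ_i^{(k)}, and Z₀ = 1 and Z_k = (Σ_{i=1}^{Z_{k−1}} ξ_i^{(k)} − M_{k+1})₊, and set T₀^W = inf{k ≥ 1 : W_k = 0} and T₀^Z = inf{k ≥ 1 : Z_k = 0}. Then (W_k − M_{k+1} + 1)₊ ≥ Z_k for all 0 ≤ k ≤ T₀^W, and Z_k ≤ W_k for all 1 ≤ k ≤ T₀^W; in particular T₀^Z ≤ T₀^W and Σ_{k=1}^{T₀^W − 1} W_k ≥ Σ_{k=1}^{T₀^Z − 1} Z_k. -/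
/-!
Every individual counted by `Z_k` is also counted by `W_k`: by induction, `Z_k` never exceeds
the number `(W_k + 1 - M_{k+1})₊` of individuals of `W`'s generation `k` that reproduce, so
`Z`'s generation `k + 1` before emigration is a sub-sum of the same offspring counts
`ξ_i^{(k+1)}` that make up `W_{k+1}`. Hence `Z_k ≤ W_k` for `k ≥ 1`, so `Z` dies out first and its
total progeny before extinction is smaller.
-/

open Finset ENNReal

namespace ENat

lemma toNat_natCast_sub_le (n : ℕ) (m : ℕ∞) : ((n : ℕ∞) - m).toNat ≤ n :=
  (toNat_le_toNat tsub_le_self (natCast_ne_top n)).trans_eq (toNat_natCast n)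

lemma toNat_natCast_sub_mono {a b : ℕ} (hab : a ≤ b) (m : ℕ∞) :
    ((a : ℕ∞) - m).toNat ≤ ((b : ℕ∞) - m).toNat :=
  toNat_le_toNat (tsub_le_tsub_right (Nat.cast_le.2 hab) m)
    (ne_top_of_le_ne_top (natCast_ne_top b) tsub_le_self)

end ENat

noncomputable def extinctionTime (f : ℕ → ℕ) : ℕ∞ :=
  sInf ((fun k : ℕ => (k : ℕ∞)) '' {k : ℕ | 1 ≤ k ∧ f k = 0})

lemma extinctionTime_mono {f g : ℕ → ℕ} (hfg : ∀ k, 1 ≤ k → f k ≤ g k) :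
    extinctionTime f ≤ extinctionTime g :=
  sInf_le_sInf <| Set.image_mono fun k ⟨hk, hg⟩ => ⟨hk, Nat.eq_zero_of_le_zero (hg ▸ hfg k hk)⟩

lemma tsum_ite_lt_le_tsum_ite_lt {f g : ℕ → ℕ} {S T : ℕ∞} (hST : S ≤ T)
    (hfg : ∀ k, 1 ≤ k → f k ≤ g k) :
    ∑' k : ℕ, (if 1 ≤ k ∧ (k : ℕ∞) < S then (f k : ℝ≥0∞) else 0)
      ≤ ∑' k : ℕ, (if 1 ≤ k ∧ (k : ℕ∞) < T then (g k : ℝ≥0∞) else 0) :=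
  ENNReal.tsum_le_tsum fun k => by
    split_ifs with hS hT
    · exact_mod_cast hfg k hS.1
    · exact absurd ⟨hS.1, hS.2.trans_le hST⟩ hT
    · exact zero_le
    · exact le_rfl

section Coupling

variable {M : ℕ → ℕ∞} {ξ : ℕ → ℕ → ℕ} {W Z : ℕ → ℕ}

lemma offspring_sum_le_of_le_reproducing
    (hWrec : ∀ k, W (k + 1) =
      ∑ i ∈ Finset.range ((((W k : ℕ∞) + 1) - M (k + 1)).toNat), ξ (i + 1) (k + 1))
    {k : ℕ} (hk : Z k ≤ (((W k : ℕ∞) + 1) - M (k + 1)).toNat) :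
    ∑ i ∈ range (Z k), ξ (i + 1) (k + 1) ≤ W (k + 1) :=
  hWrec k ▸ sum_le_sum_of_subset (range_subset_range.2 hk)

lemma coupling_le_reproducing (hM1 : M 1 = 0) (hW0 : W 0 = 0)
    (hWrec : ∀ k, W (k + 1) =
      ∑ i ∈ Finset.range ((((W k : ℕ∞) + 1) - M (k + 1)).toNat), ξ (i + 1) (k + 1))
    (hZ0 : Z 0 = 1)
    (hZrec : ∀ k, Z (k + 1) =
      ((((∑ i ∈ Finset.range (Z k), ξ (i + 1) (k + 1)) : ℕ) : ℕ∞) - M (k + 2)).toNat)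
    (k : ℕ) : Z k ≤ (((W k : ℕ∞) + 1) - M (k + 1)).toNat := by
  induction k with
  | zero => simp [hZ0, hW0, hM1]
  | succ k ih =>
    rw [hZrec, ← Nat.cast_add_one]
    exact ENat.toNat_natCast_sub_mono
      ((offspring_sum_le_of_le_reproducing hWrec ih).trans (Nat.le_succ _)) _

lemma coupling_succ_le
    (hWrec : ∀ k, W (k + 1) =
      ∑ i ∈ Finset.range ((((W k : ℕ∞) + 1) - M (k + 1)).toNat), ξ (i + 1) (k + 1))
    (hZrec : ∀ k, Z (k + 1) =
      ((((∑ i ∈ Finset.range (Z k), ξ (i + 1) (k + 1)) : ℕ) : ℕ∞) - M (k + 2)).toNat)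
    {k : ℕ} (hk : Z k ≤ (((W k : ℕ∞) + 1) - M (k + 1)).toNat) : Z (k + 1) ≤ W (k + 1) :=
  hZrec k ▸ (ENat.toNat_natCast_sub_le _ _).trans (offspring_sum_le_of_le_reproducing hWrec hk)

end Coupling

/-- **Deterministic coupling of the two branching processes with emigration**
(Section 4, third part): let `(M_k)_{k≥1}` take values in `ℕ₀ ∪ {∞}` with `M₁ = 0`,
let `ξ_i⁽ᵏ⁾ ∈ ℕ₀`, and define `W₀ = 0`, `W_k = ∑_{i=1}^{(W_{k-1}+1-M_k)₊} ξ_i⁽ᵏ⁾`,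
`Z₀ = 1`, `Z_k = (∑_{i=1}^{Z_{k-1}} ξ_i⁽ᵏ⁾ − M_{k+1})₊`, with extinction times
`T₀^W = inf{k ≥ 1 : W_k = 0}` and `T₀^Z = inf{k ≥ 1 : Z_k = 0}` (inf ∅ = ∞). Then
`(W_k − M_{k+1} + 1)₊ ≥ Z_k` for all `0 ≤ k ≤ T₀^W`, `Z_k ≤ W_k` for all
`1 ≤ k ≤ T₀^W`, `T₀^Z ≤ T₀^W`, and `∑_{k=1}^{T₀^W−1} W_k ≥ ∑_{k=1}^{T₀^Z−1} Z_k`. -/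
theorem stmt14
    (M : ℕ → ℕ∞) (hM1 : M 1 = 0)
    (ξ : ℕ → ℕ → ℕ)
    (W : ℕ → ℕ) (hW0 : W 0 = 0)
    (hWrec : ∀ k, W (k + 1) =
      ∑ i ∈ Finset.range ((((W k : ℕ∞) + 1) - M (k + 1)).toNat), ξ (i + 1) (k + 1))
    (Z : ℕ → ℕ) (hZ0 : Z 0 = 1)
    (hZrec : ∀ k, Z (k + 1) =
      ((((∑ i ∈ Finset.range (Z k), ξ (i + 1) (k + 1)) : ℕ) : ℕ∞) - M (k + 2)).toNat)
    (TW TZ : ℕ∞)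
    (hTW : TW = sInf ((fun k : ℕ => (k : ℕ∞)) '' {k : ℕ | 1 ≤ k ∧ W k = 0}))
    (hTZ : TZ = sInf ((fun k : ℕ => (k : ℕ∞)) '' {k : ℕ | 1 ≤ k ∧ Z k = 0})) :
    (∀ k : ℕ, (k : ℕ∞) ≤ TW → Z k ≤ (((W k : ℕ∞) + 1) - M (k + 1)).toNat) ∧
    (∀ k : ℕ, 1 ≤ k → (k : ℕ∞) ≤ TW → Z k ≤ W k) ∧
    TZ ≤ TW ∧
    (∑' k : ℕ, (if 1 ≤ k ∧ (k : ℕ∞) < TZ then (Z k : ℝ≥0∞) else 0))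
      ≤ ∑' k : ℕ, (if 1 ≤ k ∧ (k : ℕ∞) < TW then (W k : ℝ≥0∞) else 0) := by
  have hbound := coupling_le_reproducing hM1 hW0 hWrec hZ0 hZrec
  have hle : ∀ k, 1 ≤ k → Z k ≤ W k := fun
    | k + 1, _ => coupling_succ_le hWrec hZrec (hbound k)
  have hT : TZ ≤ TW := hTZ ▸ hTW ▸ extinctionTime_mono hle
  exact ⟨fun k _ => hbound k, fun k hk _ => hle k hk, hT, tsum_ite_lt_le_tsum_ite_lt hT hle⟩
end
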